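/- arXiv:1809.09792 — 7 statements merged into one kernel-verified Lean document; each statement's English description precedes it below -/
import Mathlib

section
/- Let P be a convex polygon, w a point in P, and a a vertex of P that is a local maximum of the distance-to-w function restricted to P. Then the line L through a perpendicular to the segment wa is a supporting line of P (all of P lies in one closed half-plane bounded by L). -/
/-!
Moving from `a` towards `x ∈ P` along the segment `[a, x] ⊆ P`, the squared distance to `w`
has initial derivative `2 ⟪x - a, a - w⟫`. At a local maximum on a convex set this first-order
variation must be nonpositive (Fermat's rule on the positive tangent cone).
-/

open scoped RealInnerProductSpace

theorem Convex.inner_sub_nonpos_of_isLocalMaxOn_dist {E : Type*} [NormedAddCommGroup E]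
    [InnerProductSpace ℝ E] {s : Set E} (hs : Convex ℝ s) {w a x : E} (ha : a ∈ s) (hx : x ∈ s)
    (hmax : IsLocalMaxOn (dist w) s a) : ⟪x - a, a - w⟫ ≤ 0 := by
  have hmax_sq : IsLocalMaxOn (fun y ↦ ‖y - w‖ ^ 2) s a :=
    hmax.mono fun y hy ↦ by
      simp only [dist_comm w, dist_eq_norm] at hy ⊢
      gcongr
  have hderiv := ((hasFDerivAt_id a).sub_const w).norm_sq.hasFDerivWithinAt (s := s)
  have hnonpos := hmax_sq.hasFDerivWithinAt_nonpos hderiv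
    (sub_mem_posTangentConeAt_of_segment_subset (hs.segment_subset ha hx))
  have h2 : 2 * ⟪a - w, x - a⟫ ≤ 0 := by simpa [inner_sub_left] using hnonpos
  rw [real_inner_comm]
  linarith

theorem stmt0_general (V : Finset (EuclideanSpace ℝ (Fin 2)))
    (P : Set (EuclideanSpace ℝ (Fin 2))) (hP : P = convexHull ℝ (V : Set (EuclideanSpace ℝ (Fin 2))))
    (w a : EuclideanSpace ℝ (Fin 2)) (ha : a ∈ P)
    (hlocmax : ∃ ε > 0, ∀ x ∈ P, dist x a < ε → dist w x ≤ dist w a) :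
    ∀ x ∈ P, ⟪x - a, a - w⟫ ≤ 0 := by
  obtain ⟨ε, hε, hmax⟩ := hlocmax
  have hlocal : IsLocalMaxOn (dist w) P a :=
    mem_nhdsWithin.2 ⟨Metric.ball a ε, Metric.isOpen_ball, Metric.mem_ball_self hε,
      fun x ⟨hxa, hx⟩ ↦ hmax x hx hxa⟩
  intro x hx
  exact (hP ▸ convex_convexHull ℝ _).inner_sub_nonpos_of_isLocalMaxOn_dist ha hx hlocal

/-- If `a ∈ P` is a local maximum of the distance to `w` over a compact
convex polygon `P = convexHull V` containing `w`, with `a ≠ w`, then the line through `a`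
perpendicular to `w - a` supports `P`: all of `P` lies in the closed half-plane
`{x | ⟪x - a, a - w⟫ ≤ 0}` (the side containing `w`). -/
theorem stmt0 (V : Finset (EuclideanSpace ℝ (Fin 2)))
    (P : Set (EuclideanSpace ℝ (Fin 2))) (hP : P = convexHull ℝ (V : Set (EuclideanSpace ℝ (Fin 2))))
    (w a : EuclideanSpace ℝ (Fin 2)) (hw : w ∈ P) (ha : a ∈ P) (hne : a ≠ w)
    (hlocmax : ∃ ε > 0, ∀ x ∈ P, dist x a < ε → dist w x ≤ dist w a) :
    ∀ x ∈ P, ⟪x - a, a - w⟫ ≤ 0 :=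
  stmt0_general V P hP w a ha hlocmax
end

section
/- Let v be a vertex of a convex polygon P whose interior angle is strictly less than π/2 (acute). Then for every point p ∈ P with p ≠ v, the vertex v is a strict local maximum of the distance to p: every point x ∈ P sufficiently close to v with x ≠ v satisfies dist(p, x) < dist(p, v). -/
/-!
Put `q = p - v`. Every vertex `u ≠ v` sees `q` at an acute angle, so `⟪q, u - v⟫ > 0`, and since
there are finitely many vertices, `κ ‖u - v‖ ≤ ⟪q, u - v⟫` for some `κ > 0`. The function
`x ↦ κ ‖x - v‖ - ⟪q, x - v⟫` is convex, so this inequality propagates from the vertices to all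
of `P`. Then `‖p - x‖² = ‖q‖² - 2 ⟪q, x - v⟫ + ‖x - v‖² < ‖q‖²` as soon as `0 < ‖x - v‖ < 2κ`.
-/

open Filter Topology
open scoped RealInnerProductSpace

variable {E : Type*} [NormedAddCommGroup E] [InnerProductSpace ℝ E]

theorem InnerProductGeometry.inner_pos_of_angle_lt_pi_div_two {x y : E}
    (h : angle x y < Real.pi / 2) : 0 < ⟪x, y⟫ := by
  have hdiv : 0 < ⟪x, y⟫ / (‖x‖ * ‖y‖) := Real.arccos_lt_pi_div_two.mp h
  rcases div_pos_iff.mp hdiv with ⟨hxy, -⟩ | ⟨-, hneg⟩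
  · exact hxy
  · exact absurd hneg (not_lt.mpr (by positivity))

theorem Finset.exists_pos_mul_norm_sub_le_inner {s : Finset E} {v q : E}
    (h : ∀ u ∈ s, u ≠ v → 0 < ⟪q, u - v⟫) :
    ∃ κ > 0, ∀ u ∈ s, κ * ‖u - v‖ ≤ ⟪q, u - v⟫ := by
  have hsmall : ∀ u ∈ s, ∀ᶠ κ in 𝓝 (0 : ℝ), κ * ‖u - v‖ ≤ ⟪q, u - v⟫ := by
    intro u hu
    by_cases huv : u = v
    · simp [huv]
    · have hlim : Tendsto (fun κ : ℝ => κ * ‖u - v‖) (𝓝 0) (𝓝 0) :=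
        (continuous_mul_const ‖u - v‖).tendsto' 0 0 (zero_mul _)
      exact hlim.eventually (eventually_le_nhds (h u hu huv))
  exact ((eventually_mem_nhdsWithin (s := Set.Ioi 0)).and
    (((eventually_all_finset s).2 hsmall).filter_mono nhdsWithin_le_nhds)).exists

theorem convexOn_mul_norm_sub_sub_inner {κ : ℝ} (hκ : 0 ≤ κ) (v q : E) :
    ConvexOn ℝ Set.univ (fun x : E => κ * ‖x - v‖ - ⟪q, x - v⟫) := by
  have hnorm : ConvexOn ℝ Set.univ (fun x : E => ‖x - v‖) := by
    simpa [Function.comp_def, ← sub_eq_neg_add] using convexOn_univ_norm.translate_right (-v)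
  have hinner : ConcaveOn ℝ Set.univ (fun x : E => ⟪q, x - v⟫) := by
    simpa [Pi.add_def, inner_sub_right, ← sub_eq_add_neg] using
      ((innerₛₗ ℝ q).concaveOn convex_univ).add_const (-⟪q, v⟫)
  exact (hnorm.smul hκ).sub hinner

theorem mul_norm_sub_le_inner_of_mem_convexHull {s : Set E} {v q x : E} {κ : ℝ} (hκ : 0 ≤ κ)
    (hs : ∀ u ∈ s, κ * ‖u - v‖ ≤ ⟪q, u - v⟫) (hx : x ∈ convexHull ℝ s) :
    κ * ‖x - v‖ ≤ ⟪q, x - v⟫ := by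
  obtain ⟨u, hu, hxu⟩ :=
    (convexOn_mul_norm_sub_sub_inner hκ v q).exists_ge_of_mem_convexHull (Set.subset_univ _) hx
  linarith [hs u hu]

theorem dist_lt_dist_of_norm_sub_sq_lt_two_inner {p v x : E}
    (h : ‖x - v‖ ^ 2 < 2 * ⟪p - v, x - v⟫) : dist p x < dist p v := by
  have hsq : dist p x ^ 2 < dist p v ^ 2 := by
    rw [dist_eq_norm, dist_eq_norm, show p - x = (p - v) - (x - v) by abel, norm_sub_sq_real]
    linarith
  exact lt_of_pow_lt_pow_left₀ 2 dist_nonneg hsq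

theorem stmt1_general (V : Finset (EuclideanSpace ℝ (Fin 2)))
    (P : Set (EuclideanSpace ℝ (Fin 2))) (hP : P = convexHull ℝ (V : Set (EuclideanSpace ℝ (Fin 2))))
    (v : EuclideanSpace ℝ (Fin 2))
    (hacute : ∀ x ∈ P, x ≠ v → ∀ y ∈ P, y ≠ v →
      EuclideanGeometry.angle x v y < Real.pi / 2) :
    ∀ p ∈ P, p ≠ v → ∃ ε > 0, ∀ x ∈ P, x ≠ v → dist x v < ε → dist p x < dist p v := by
  subst hP
  intro p hp hpv
  obtain ⟨κ, hκ, hvertices⟩ := V.exists_pos_mul_norm_sub_le_inner (v := v) (q := p - v)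
    fun u hu huv => InnerProductGeometry.inner_pos_of_angle_lt_pi_div_two
      (hacute p hp hpv u (subset_convexHull ℝ _ hu) huv)
  refine ⟨2 * κ, by positivity, fun x hx hxv hxε => dist_lt_dist_of_norm_sub_sq_lt_two_inner ?_⟩
  have hx_cone := mul_norm_sub_le_inner_of_mem_convexHull hκ.le hvertices hx
  have hx_pos : 0 < ‖x - v‖ := norm_pos_iff.mpr (sub_ne_zero.mpr hxv)
  rw [dist_eq_norm] at hxε
  nlinarith

/-- If `v` is an acute vertex of a compact convex polygon `P` (the interior
angle at `v`, i.e. the supremum of angles `∠ x v y` over `x, y ∈ P \ {v}`, is less than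
`π/2`), then for every `p ∈ P` with `p ≠ v`, `v` is a strict local maximum of the distance
to `p`. -/
theorem stmt1 (V : Finset (EuclideanSpace ℝ (Fin 2)))
    (P : Set (EuclideanSpace ℝ (Fin 2))) (hP : P = convexHull ℝ (V : Set (EuclideanSpace ℝ (Fin 2))))
    (v : EuclideanSpace ℝ (Fin 2)) (hv : v ∈ V)
    (hacute : ∀ x ∈ P, x ≠ v → ∀ y ∈ P, y ≠ v →
      EuclideanGeometry.angle x v y < Real.pi / 2) :
    ∀ p ∈ P, p ≠ v → ∃ ε > 0, ∀ x ∈ P, x ≠ v → dist x v < ε → dist p x < dist p v :=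
  stmt1_general V P hP v hacute
end

section
/- Let D be the smallest enclosing disk of a finite set S of points in the plane, with center c. If no two points of S on the boundary circle of D are antipodal (form a diameter), then there exist three points of S on the boundary circle of D such that c lies in the interior of the triangle they form. -/
/-!
If `c` were not in the convex hull of the points of `S` on the boundary circle, a line would
separate it from them, and moving the center slightly towards that side would bring every point
of `S` strictly inside the disk, contradicting minimality. By Carathéodory's theorem, `c` is then
a positive convex combination of affinely independent boundary points, at most three of them in
the plane. Fewer than three would put `c` on a segment between two boundary points, making them
antipodal; three form an affine basis in whose barycentric coordinates `c` is positive, so `c`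
is interior.
-/

open Metric Filter Topology Set Module

section MinimalBall

variable {E : Type*} [NormedAddCommGroup E] [InnerProductSpace ℝ E]

lemma dist_add_smul_sq (p c d : E) (t : ℝ) :
    dist p (c + t • d) ^ 2 = dist p c ^ 2 - t * (2 * inner ℝ d (p - c) - t * ‖d‖ ^ 2) := by
  rw [dist_eq_norm, dist_eq_norm, show p - (c + t • d) = (p - c) - t • d by abel,
    norm_sub_sq_real, inner_smul_right, real_inner_comm, norm_smul, Real.norm_eq_abs, mul_pow,
    sq_abs]
  ring

lemma eventually_dist_add_smul_lt {c p d : E} {r : ℝ} (hp : dist p c ≤ r)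
    (hd : dist p c = r → 0 < inner ℝ d (p - c)) :
    ∀ᶠ t in 𝓝[>] (0 : ℝ), dist p (c + t • d) < r := by
  rcases hp.lt_or_eq with hlt | heq
  · have hcont : Continuous fun t : ℝ => dist p (c + t • d) := by fun_prop
    refine nhdsWithin_le_nhds ((hcont.tendsto 0).eventually (gt_mem_nhds ?_))
    simpa using hlt
  · have hlim : Tendsto (fun t : ℝ => 2 * inner ℝ d (p - c) - t * ‖d‖ ^ 2) (𝓝 0)
        (𝓝 (2 * inner ℝ d (p - c))) :=
      (continuous_const.sub (continuous_id.mul continuous_const)).tendsto' _ _ (by simp)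
    have hpos : 0 < 2 * inner ℝ d (p - c) := by linarith [hd heq]
    filter_upwards [self_mem_nhdsWithin, nhdsWithin_le_nhds (hlim.eventually (lt_mem_nhds hpos))]
      with t (ht : 0 < t) hslope
    have hsq : dist p (c + t • d) ^ 2 < r ^ 2 := by
      rw [dist_add_smul_sq, heq]
      nlinarith [mul_pos ht hslope]
    exact lt_of_pow_lt_pow_left₀ 2 (heq ▸ dist_nonneg) hsq

lemma exists_closedBall_radius_lt_of_inner_pos [FiniteDimensional ℝ E] (S : Finset E)
    {c d : E} {r : ℝ} (henc : (S : Set E) ⊆ closedBall c r)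
    (hd : ∀ p ∈ S, dist p c = r → 0 < inner ℝ d (p - c)) :
    ∃ c' r', r' < r ∧ (S : Set E) ⊆ closedBall c' r' := by
  obtain ⟨t, ht⟩ := (eventually_all_finset S).2
    (fun p hp => eventually_dist_add_smul_lt (henc hp) (hd p hp)) |>.exists
  obtain ⟨r', hr', hball⟩ := exists_lt_subset_ball S.isClosed (fun p hp => mem_ball.2 (ht p hp))
  exact ⟨c + t • d, r', hr', hball.trans ball_subset_closedBall⟩

theorem center_mem_convexHull_inter_sphere [FiniteDimensional ℝ E] (S : Finset E) {c : E}
    {r : ℝ} (henc : (S : Set E) ⊆ closedBall c r)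
    (hmin : ∀ c' r', (S : Set E) ⊆ closedBall c' r' → r ≤ r') :
    c ∈ convexHull ℝ ((S : Set E) ∩ sphere c r) := by
  by_contra hc
  obtain ⟨f, u, hfc, hf⟩ := geometric_hahn_banach_point_closed (convex_convexHull ℝ _)
    ((S.finite_toSet.inter_of_left _).isClosed_convexHull (𝕜 := ℝ)) hc
  obtain ⟨c', r', hr', hsub⟩ := exists_closedBall_radius_lt_of_inner_pos S henc
    (d := (InnerProductSpace.toDual ℝ E).symm f) fun p hp hpc => by
      rw [InnerProductSpace.toDual_symm_apply, map_sub]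
      linarith [hf p (subset_convexHull ℝ _ ⟨hp, hpc⟩)]
  linarith [hmin c' r' hsub]

end MinimalBall

section Planar

variable {E : Type*} [NormedAddCommGroup E] [NormedSpace ℝ E]

lemma dist_eq_two_mul_of_center_mem_segment {p q c : E} {r : ℝ} (hp : p ∈ sphere c r)
    (hq : q ∈ sphere c r) (hc : c ∈ segment ℝ p q) : dist p q = 2 * r := by
  rw [← dist_add_dist_of_mem_segment hc, mem_sphere.1 hp, ← mem_sphere'.1 hq, two_mul]

lemma AffineIndependent.sum_smul_mem_interior_convexHull [FiniteDimensional ℝ E] {ι : Type*}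
    [Fintype ι] {z : ι → E} (hz : AffineIndependent ℝ z)
    (hcard : Fintype.card ι = finrank ℝ E + 1) {w : ι → ℝ} (hw : ∀ i, 0 < w i)
    (hw1 : ∑ i, w i = 1) :
    ∑ i, w i • z i ∈ interior (convexHull ℝ (range z)) := by
  let b : AffineBasis ι ℝ E :=
    ⟨z, hz, hz.affineSpan_eq_top_iff_card_eq_finrank_add_one.2 hcard⟩
  change _ ∈ interior (convexHull ℝ (range b))
  rw [b.interior_convexHull, ← Finset.univ.affineCombination_eq_linear_combination _ _ hw1]
  intro i
  change 0 < b.coord i (Finset.univ.affineCombination ℝ b w)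
  rw [b.coord_apply_combination_of_mem (Finset.mem_univ i) hw1]
  exact hw i

lemma exists_pair_of_card_lt_three {ι : Type*} [Fintype ι] [Nonempty ι]
    (h : Fintype.card ι < 3) : ∃ i j : ι, ∀ k, k = i ∨ k = j := by
  classical
  obtain ⟨i⟩ := ‹Nonempty ι›
  have hcard : (Finset.univ.erase i).card ≤ 1 := by
    rw [Finset.card_erase_of_mem (Finset.mem_univ i), Finset.card_univ]
    omega
  obtain ⟨j, hj⟩ := Finset.card_le_one_iff_subset_singleton.1 hcard
  refine ⟨i, j, fun k => or_iff_not_imp_left.2 fun hk => ?_⟩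
  exact Finset.mem_singleton.1 (hj (Finset.mem_erase.2 ⟨hk, Finset.mem_univ k⟩))

theorem exists_mem_interior_convexHull_triple [FiniteDimensional ℝ E] (hE : finrank ℝ E = 2)
    {B : Set E} {c : E} {r : ℝ} (hB : B ⊆ sphere c r)
    (hanti : ∀ p ∈ B, ∀ q ∈ B, dist p q ≠ 2 * r) (hc : c ∈ convexHull ℝ B) :
    ∃ p ∈ B, ∃ q ∈ B, ∃ s ∈ B, c ∈ interior (convexHull ℝ {p, q, s}) := by
  classical
  obtain ⟨ι, _, z, w, hzB, hz, hw, hw1, rfl⟩ := eq_pos_convex_span_of_mem_convexHull hc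
  have hzB' (i : ι) : z i ∈ B := hzB (mem_range_self i)
  have hcard : Fintype.card ι ≤ 3 :=
    hz.card_le_finrank_succ.trans (Nat.succ_le_succ (hE ▸ Submodule.finrank_le _))
  rcases hcard.lt_or_eq with hlt | h3
  · have : Nonempty ι := by
      by_contra h
      simp [not_nonempty_iff.1 h] at hw1
    obtain ⟨i, j, hij⟩ := exists_pair_of_card_lt_three hlt
    have hseg : ∑ k, w k • z k ∈ segment ℝ (z i) (z j) := by
      rw [← convexHull_pair]
      refine (convex_convexHull ℝ _).sum_mem (fun k _ => (hw k).le) hw1 fun k _ => ?_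
      exact subset_convexHull ℝ _ (by rcases hij k with rfl | rfl <;> simp)
    exact (hanti _ (hzB' i) _ (hzB' j)
      (dist_eq_two_mul_of_center_mem_segment (hB (hzB' i)) (hB (hzB' j)) hseg)).elim
  · obtain ⟨i, j, k, -, -, -, huniv⟩ := Finset.card_eq_three.1 h3
    refine ⟨z i, hzB' i, z j, hzB' j, z k, hzB' k, ?_⟩
    have hrange : range z = {z i, z j, z k} := by
      rw [← image_univ, ← Finset.coe_univ, huniv]
      simp [image_insert_eq]
    exact hrange ▸ hz.sum_smul_mem_interior_convexHull (by rw [h3, hE]) hw hw1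

end Planar

theorem stmt4_general (S : Finset (EuclideanSpace ℝ (Fin 2)))
    (c : EuclideanSpace ℝ (Fin 2)) (r : ℝ)
    (henc : (S : Set (EuclideanSpace ℝ (Fin 2))) ⊆ Metric.closedBall c r)
    (hmin : ∀ (c' : EuclideanSpace ℝ (Fin 2)) (r' : ℝ),
      (S : Set (EuclideanSpace ℝ (Fin 2))) ⊆ Metric.closedBall c' r' → r ≤ r')
    (hnodiam : ∀ p ∈ S, ∀ q ∈ S, dist c p = r → dist c q = r → dist p q ≠ 2 * r) :
    ∃ p ∈ S, ∃ q ∈ S, ∃ s ∈ S, dist c p = r ∧ dist c q = r ∧ dist c s = r ∧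
      c ∈ interior (convexHull ℝ ({p, q, s} : Set (EuclideanSpace ℝ (Fin 2)))) := by
  obtain ⟨p, ⟨hpS, hp⟩, q, ⟨hqS, hq⟩, s, ⟨hsS, hs⟩, hc⟩ :=
    exists_mem_interior_convexHull_triple finrank_euclideanSpace_fin inter_subset_right
      (fun p hp q hq => hnodiam p hp.1 q hq.1 (mem_sphere'.1 hp.2) (mem_sphere'.1 hq.2))
      (center_mem_convexHull_inter_sphere S henc hmin)
  exact ⟨p, hpS, q, hqS, s, hsS, mem_sphere'.1 hp, mem_sphere'.1 hq, mem_sphere'.1 hs, hc⟩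

/-- Let the closed ball `B(c, r)` be the smallest enclosing disk of a finite
set `S` of at least three points (with `r > 0`). If no two points of `S` on the boundary
circle are antipodal, then there are three boundary points of `S` whose triangle contains
`c` in its interior. -/
theorem stmt4 (S : Finset (EuclideanSpace ℝ (Fin 2))) (hcard : 3 ≤ S.card)
    (c : EuclideanSpace ℝ (Fin 2)) (r : ℝ) (hr : 0 < r)
    (henc : (S : Set (EuclideanSpace ℝ (Fin 2))) ⊆ Metric.closedBall c r)
    (hmin : ∀ (c' : EuclideanSpace ℝ (Fin 2)) (r' : ℝ),
      (S : Set (EuclideanSpace ℝ (Fin 2))) ⊆ Metric.closedBall c' r' → r ≤ r')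
    (hnodiam : ∀ p ∈ S, ∀ q ∈ S, dist c p = r → dist c q = r → dist p q ≠ 2 * r) :
    ∃ p ∈ S, ∃ q ∈ S, ∃ s ∈ S, dist c p = r ∧ dist c q = r ∧ dist c s = r ∧
      c ∈ interior (convexHull ℝ ({p, q, s} : Set (EuclideanSpace ℝ (Fin 2)))) :=
  stmt4_general S c r henc hmin hnodiam
end

section
/- In the regular (2k+1)-gon with k ≥ 2, edge length 2, and edge e₀ horizontal at the bottom, the perpendicular slab of e₀ (the set of points of the polygon whose orthogonal projection onto the line through e₀ lies within e₀) contains the upper half of edge e_{k+1}, i.e., contains the closed segment from the midpoint of e_{k+1} to its endpoint v_{k+1}. -/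
/-!
Let `x = π/(2k+1)`, so the circumradius is `R = 1/sin x`. The bottom edge `e₀` is the segment
from `(-1, -cot x)` to `(1, -cot x)`, so a point lies over it exactly when its first coordinate
is in `[-1, 1]`. The top vertex `v_{k+1}` has first coordinate `0`, and its neighbour `v_{k+2}`
has first coordinate `-R sin 2x = -2 cos x`, so the first coordinates along the upper half of
`e_{k+1}` stay between `-cos x` and `0`.
-/

open Real Set

/-- Vertex `i` of the regular `n`-gon with edge length `2` (circumradius `1 / sin (π / n)`),
centred at the origin, with horizontal bottom edge from vertex `0` to vertex `1`. -/
noncomputable def regularPolygonVertex (n i : ℕ) : ℝ × ℝ :=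
  (1 / sin (π / n) * cos (-(π / 2) - π / n + 2 * π * i / n),
    1 / sin (π / n) * sin (-(π / 2) - π / n + 2 * π * i / n))

theorem sin_pi_div_natCast_pos {n : ℕ} (hn : 2 ≤ n) : 0 < sin (π / n) := by
  have hn' : (1 : ℝ) < n := by exact_mod_cast hn
  exact sin_pos_of_pos_of_lt_pi (by positivity) (div_lt_self pi_pos hn')

namespace regularPolygonVertex

theorem eq_of_angle_eq {n i : ℕ} {φ : ℝ} (h : -(π / 2) - π / n + 2 * π * i / n = φ) :
    regularPolygonVertex n i = (cos φ / sin (π / n), sin φ / sin (π / n)) := by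
  simp only [regularPolygonVertex, h, one_div_mul_eq_div]

theorem zero {n : ℕ} (hn : 2 ≤ n) : regularPolygonVertex n 0 = (-1, -cot (π / n)) := by
  rw [eq_of_angle_eq (φ := -(π / n + π / 2)) (by push_cast; ring), cos_neg, sin_neg,
    cos_add_pi_div_two, sin_add_pi_div_two, cot_eq_cos_div_sin, neg_div,
    div_self (sin_pi_div_natCast_pos hn).ne', neg_div]

theorem one {n : ℕ} (hn : 2 ≤ n) : regularPolygonVertex n 1 = (1, -cot (π / n)) := by
  rw [eq_of_angle_eq (φ := -(π / 2 - π / n)) (by push_cast; ring), cos_neg, sin_neg,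
    cos_pi_div_two_sub, sin_pi_div_two_sub, cot_eq_cos_div_sin,
    div_self (sin_pi_div_natCast_pos hn).ne', neg_div]

theorem fst_top (k : ℕ) : (regularPolygonVertex (2 * k + 1) (k + 1)).1 = 0 := by
  rw [eq_of_angle_eq (φ := π / 2) (by push_cast; field_simp; ring), cos_pi_div_two, zero_div]

theorem fst_top_succ {k : ℕ} (hk : 1 ≤ k) :
    (regularPolygonVertex (2 * k + 1) (k + 2)).1 = -2 * cos (π / ↑(2 * k + 1)) := by
  have hs := (sin_pi_div_natCast_pos (n := 2 * k + 1) (by omega)).ne'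
  rw [eq_of_angle_eq (φ := 2 * (π / ↑(2 * k + 1)) + π / 2) (by push_cast; field_simp; ring),
    cos_add_pi_div_two, sin_two_mul]
  field_simp

theorem fst_midpoint_top_edge {k : ℕ} (hk : 1 ≤ k) :
    (midpoint ℝ (regularPolygonVertex (2 * k + 1) (k + 1))
      (regularPolygonVertex (2 * k + 1) (k + 2))).1 = -cos (π / ↑(2 * k + 1)) := by
  rw [midpoint_eq_smul_add, Prod.smul_fst, Prod.fst_add, fst_top, fst_top_succ hk, smul_eq_mul,
    invOf_eq_inv]
  ring

end regularPolygonVertex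

/-- In the regular `(2k+1)`-gon with `k ≥ 2`, edge length 2, edge `e₀`
horizontal at the bottom (vertices `v i` on the circumcircle of radius `R = 1/sin(π/n)`
centered at the origin at angles `θ i = -π/2 - π/n + 2πi/n`, `n = 2k+1`), the
perpendicular slab of `e₀` contains the upper half of edge `e_{k+1}`: for every point `p`
of the segment from the midpoint of `e_{k+1}` to `v_{k+1}`, the orthogonal projection of
`p` onto the (horizontal) line through `e₀` lies in the closed segment `e₀`. -/
theorem stmt10 (k : ℕ) (hk : 2 ≤ k) (n : ℕ) (hn : n = 2 * k + 1)
    (R : ℝ) (hR : R = 1 / Real.sin (π / n))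
    (θ : ℕ → ℝ) (hθ : ∀ i, θ i = -(π / 2) - π / n + 2 * π * i / n)
    (v : ℕ → ℝ × ℝ) (hv : ∀ i, v i = (R * Real.cos (θ i), R * Real.sin (θ i))) :
    ∀ p ∈ segment ℝ (midpoint ℝ (v (k + 1)) (v (k + 2))) (v (k + 1)),
      (p.1, (v 0).2) ∈ segment ℝ (v 0) (v 1) := by
  obtain rfl : v = regularPolygonVertex n := funext fun i => by rw [hv, hθ, hR]; rfl
  subst hn
  intro p hp
  rw [regularPolygonVertex.zero (by omega), regularPolygonVertex.one (by omega),
    ← Prod.image_mk_segment_left, segment_eq_Icc (by norm_num)]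
  refine ⟨p.1, ?_, rfl⟩
  have hp1 := (Prod.segment_subset _ _ hp).1
  rw [segment_eq_uIcc, regularPolygonVertex.fst_midpoint_top_edge (by omega),
    regularPolygonVertex.fst_top] at hp1
  exact uIcc_subset_Icc ⟨neg_le_neg (cos_le_one _), neg_le.mpr (neg_one_le_cos _)⟩
    ⟨by norm_num, zero_le_one⟩ hp1
end

section
/- Let P be a convex polygon inscribed in a circle C centered at c, and suppose vertices v_i and v_j of P are antipodal on C (v_i v_j is a diameter). Orient so that the segment v_i v_j is vertical with v_i below. Then the boundary chain of P from v_i counterclockwise to v_j is self-approaching from v_j to v_i: for any three points x, y, z occurring in this order along the chain traversed from v_j to v_i, dist(x, z) ≥ dist(y, z). -/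
/-!
The chain is self-approaching as soon as, for `t₁ ≤ t₂ ≤ t₃`, the point `y = γ t₂` lies in the
closed disk with diameter `[x, z]`, `x = γ t₁`, `z = γ t₃` (i.e. the angle `xyz` is not acute).
Because `γ` runs injectively along the frontier of a convex set, interleaved chords cross:
`[vj, y]` meets `[x, z]` at some `p`, and `[y, vi]` meets `[x, z]` at some `q`. As `vj vi` is a
diameter of `C ⊇ P`, the point `y` lies in the disk with diameter `[vj, vi]`, hence in the disk
with diameter `[p, q]`, which is contained in the disk with diameter `[x, z]` as `p, q ∈ [x, z]`.

Chords cross because otherwise a line separating them would be crossed by `γ` three times, and of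
three frontier points of a planar convex set on a line with points of the set on both sides, the
middle one is interior.
-/

open scoped RealInnerProductSpace
open Set Metric Module

lemma apply_eq_of_sbtw_of_le {E F : Type*} [AddCommGroup E] [Module ℝ E] [FunLike F E ℝ]
    [LinearMapClass F ℝ E ℝ] (g : F) {a e b : E} (h : Sbtw ℝ a e b) (ha : g a ≤ g e)
    (hb : g b ≤ g e) : g a = g e ∧ g b = g e := by
  obtain ⟨t, ⟨ht₀, ht₁⟩, rfl⟩ := h.mem_image_Ioo
  simp only [AffineMap.lineMap_apply_module, map_add, map_smul, smul_eq_mul] at ha hb ⊢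
  constructor <;> nlinarith

lemma isCompact_segment {E : Type*} [NormedAddCommGroup E] [NormedSpace ℝ E] (x y : E) :
    IsCompact (segment ℝ x y) := by
  rw [← convexHull_pair]
  exact (toFinite _).isCompact_convexHull (𝕜 := ℝ)

section LinearFunctionalsOnPlane

attribute [local instance] FiniteDimensional.of_fact_finrank_eq_two

variable {E : Type*} [AddCommGroup E] [Module ℝ E] [Fact (finrank ℝ E = 2)]

lemma finrank_ker_eq_one {f : Module.Dual ℝ E} (hf : f ≠ 0) :
    finrank ℝ (LinearMap.ker f) = 1 := by
  have := Module.Dual.finrank_ker_add_one_of_ne_zero hf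
  rw [Fact.out (p := finrank ℝ E = 2)] at this
  exact Nat.add_right_cancel this

lemma ker_eq_span_singleton {f : Module.Dual ℝ E} (hf : f ≠ 0) {d : E} (hd : d ≠ 0)
    (hfd : f d = 0) : LinearMap.ker f = ℝ ∙ d :=
  (Submodule.eq_of_le_of_finrank_eq (Submodule.span_singleton_le_iff_mem _ _ |>.2 hfd)
    (by rw [finrank_span_singleton hd, finrank_ker_eq_one hf])).symm

lemma collinear_of_forall_apply_eq {f : Module.Dual ℝ E} (hf : f ≠ 0) {s : Set E} {δ : ℝ}
    (hs : ∀ x ∈ s, f x = δ) : Collinear ℝ s := by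
  rw [collinear_iff_finrank_le_one, ← finrank_ker_eq_one hf]
  refine Submodule.finrank_mono (Submodule.span_le.2 ?_)
  rintro _ ⟨x, hx, y, hy, rfl⟩
  simp [hs x hx, hs y hy]

lemma exists_eq_smul_of_apply_eq_zero {f g : Module.Dual ℝ E} (hf : f ≠ 0) {d : E} (hd : d ≠ 0)
    (hfd : f d = 0) (hgd : g d = 0) : ∃ c : ℝ, g = c • f := by
  have hker : LinearMap.ker f ≤ LinearMap.ker g := by
    rw [ker_eq_span_singleton hf hd hfd]
    exact (Submodule.span_singleton_le_iff_mem _ _).2 hgd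
  have := mem_span_of_iInf_ker_le_ker (L := fun _ : Unit => f) (K := g) (by simpa using hker)
  obtain ⟨c, hc⟩ := Submodule.mem_span_singleton.1 (by simpa using this)
  exact ⟨c, hc.symm⟩

lemma affineSpan_eq_top_of_apply_eq_of_apply_ne {s : Set E} {f : Module.Dual ℝ E} {a b p : E}
    (ha : a ∈ s) (hb : b ∈ s) (hp : p ∈ s) (hab : a ≠ b) (hfab : f a = f b)
    (hfp : f p ≠ f a) : affineSpan ℝ s = ⊤ := by
  have hf : f ≠ 0 := by rintro rfl; simp at hfp
  have hker : LinearMap.ker f = ℝ ∙ (b - a) :=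
    ker_eq_span_singleton hf (sub_ne_zero.2 hab.symm) (by simp [hfab])
  rw [AffineSubspace.affineSpan_eq_top_iff_vectorSpan_eq_top_of_nonempty ℝ E E ⟨a, ha⟩]
  have hlt : LinearMap.ker f < vectorSpan ℝ s := by
    refine SetLike.lt_iff_le_and_exists.2 ⟨?_, p - a, vsub_mem_vectorSpan ℝ hp ha, ?_⟩
    · rw [hker]
      exact (Submodule.span_singleton_le_iff_mem _ _).2 (vsub_mem_vectorSpan ℝ hb ha)
    · simpa [sub_eq_zero] using hfp
  have := Submodule.finrank_lt_finrank_of_lt hlt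
  rw [finrank_ker_eq_one hf] at this
  exact Submodule.eq_top_of_finrank_eq
    (le_antisymm (Submodule.finrank_le _) (by rw [Fact.out (p := finrank ℝ E = 2)]; omega))

end LinearFunctionalsOnPlane

section ConvexSetsInPlane

attribute [local instance] FiniteDimensional.of_fact_finrank_eq_two

variable {E : Type*} [NormedAddCommGroup E] [NormedSpace ℝ E] [Fact (finrank ℝ E = 2)]
  {P : Set E}

theorem Convex.mem_interior_of_sbtw (hP : Convex ℝ P) (f : Module.Dual ℝ E) {δ : ℝ}
    {a e b p q : E} (ha : a ∈ P) (hb : b ∈ P) (hp : p ∈ P) (hq : q ∈ P) (hfa : f a = δ)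
    (hfb : f b = δ) (hfp : δ < f p) (hfq : f q < δ) (h : Sbtw ℝ a e b) : e ∈ interior P := by
  by_contra he
  have hint : (interior P).Nonempty := hP.interior_nonempty_iff_affineSpan_eq_top.2 <|
    affineSpan_eq_top_of_apply_eq_of_apply_ne ha hb hp h.left_ne_right (hfa.trans hfb.symm)
      (by linarith)
  -- A supporting functional `g` at `e` is constant on the chord `[a, b]`, so it is a multiple
  -- of `f`; as `p` and `q` lie on opposite sides of the chord, that multiple is `0`.
  obtain ⟨g, hg₀, hg⟩ := geometric_hahn_banach_of_nonempty_interior_point hP he hint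
  obtain ⟨hga, hgb⟩ := apply_eq_of_sbtw_of_le g h (hg a ha) (hg b hb)
  have hf : f ≠ 0 := by rintro rfl; simp at hfp hfq; linarith
  obtain ⟨c, hc⟩ := exists_eq_smul_of_apply_eq_zero (g := (g : Module.Dual ℝ E)) hf
    (sub_ne_zero.2 h.left_ne_right.symm) (by simp [hfa, hfb]) (by simp [hga, hgb])
  have hgx : ∀ x, g x = c * f x := fun x => by simpa using LinearMap.congr_fun hc x
  have hcp := hg p hp
  have hcq := hg q hq
  rw [← hga] at hcp hcq
  simp only [hgx, hfa] at hcp hcq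
  have hc₀ : c = 0 := by nlinarith
  exact hg₀ (ContinuousLinearMap.ext fun x => by simp [hgx, hc₀])

theorem Convex.eq_or_eq_or_eq_of_mem_frontier_of_apply_eq (hP : Convex ℝ P) (hPc : IsClosed P)
    (f : Module.Dual ℝ E) {δ : ℝ} {p q e₁ e₂ e₃ : E} (hp : p ∈ P) (hq : q ∈ P)
    (hfp : δ < f p) (hfq : f q < δ) (he₁ : e₁ ∈ frontier P) (he₂ : e₂ ∈ frontier P)
    (he₃ : e₃ ∈ frontier P) (hf₁ : f e₁ = δ) (hf₂ : f e₂ = δ) (hf₃ : f e₃ = δ) :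
    e₁ = e₂ ∨ e₂ = e₃ ∨ e₃ = e₁ := by
  have hf : f ≠ 0 := by rintro rfl; simp at hfp hfq; linarith
  have hmiddle : ∀ {x y z : E}, x ∈ frontier P → y ∈ frontier P → z ∈ frontier P →
      f x = δ → f z = δ → Wbtw ℝ x y z → y = x ∨ y = z := fun hx hy hz hfx hfz hxyz => by
    by_contra! hne
    exact hy.2 (hP.mem_interior_of_sbtw f (hPc.frontier_subset hx) (hPc.frontier_subset hz)
      hp hq hfx hfz hfp hfq ⟨hxyz, hne⟩)
  have hcol : Collinear ℝ {e₁, e₂, e₃} :=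
    collinear_of_forall_apply_eq hf (δ := δ) (by simp [hf₁, hf₂, hf₃])
  rcases hcol.wbtw_or_wbtw_or_wbtw with h | h | h
  · rcases hmiddle he₁ he₂ he₃ hf₁ hf₃ h with h | h <;> tauto
  · rcases hmiddle he₂ he₃ he₁ hf₂ hf₁ h with h | h <;> tauto
  · rcases hmiddle he₃ he₁ he₂ hf₃ hf₂ h with h | h <;> tauto

theorem Convex.segment_inter_segment_nonempty_of_injOn_frontier (hP : Convex ℝ P)
    (hPc : IsClosed P) {γ : ℝ → E} (hcont : ContinuousOn γ (Icc 0 1))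
    (hinj : InjOn γ (Icc 0 1)) (hbd : ∀ t ∈ Icc (0 : ℝ) 1, γ t ∈ frontier P)
    {a₀ a₁ a₂ a₃ : ℝ} (h₀ : 0 ≤ a₀) (h₀₁ : a₀ ≤ a₁) (h₁₂ : a₁ ≤ a₂) (h₂₃ : a₂ ≤ a₃)
    (h₃ : a₃ ≤ 1) : (segment ℝ (γ a₀) (γ a₂) ∩ segment ℝ (γ a₁) (γ a₃)).Nonempty := by
  rcases h₀₁.eq_or_lt with rfl | h₀₁
  · exact ⟨γ a₀, left_mem_segment _ _ _, left_mem_segment _ _ _⟩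
  rcases h₁₂.eq_or_lt with rfl | h₁₂
  · exact ⟨γ a₁, right_mem_segment _ _ _, left_mem_segment _ _ _⟩
  rcases h₂₃.eq_or_lt with rfl | h₂₃
  · exact ⟨γ a₂, right_mem_segment _ _ _, right_mem_segment _ _ _⟩
  rw [← not_disjoint_iff_nonempty_inter]
  intro hdisj
  obtain ⟨f, u, v, hfu, huv, hfv⟩ := geometric_hahn_banach_compact_closed (convex_segment _ _)
    (isCompact_segment _ _) (convex_segment _ _) (isCompact_segment _ _).isClosed hdisj
  obtain ⟨δ, huδ, hδv⟩ := exists_between huv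
  have hf₀ : f (γ a₀) < δ := by linarith [hfu _ (left_mem_segment ℝ (γ a₀) (γ a₂))]
  have hf₂ : f (γ a₂) < δ := by linarith [hfu _ (right_mem_segment ℝ (γ a₀) (γ a₂))]
  have hf₁ : δ < f (γ a₁) := by linarith [hfv _ (left_mem_segment ℝ (γ a₁) (γ a₃))]
  have hf₃ : δ < f (γ a₃) := by linarith [hfv _ (right_mem_segment ℝ (γ a₁) (γ a₃))]
  have hmem : ∀ {t : ℝ}, a₀ ≤ t → t ≤ a₃ → t ∈ Icc (0 : ℝ) 1 := fun hs ht =>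
    ⟨h₀.trans hs, ht.trans h₃⟩
  have hg : ∀ {s t : ℝ}, a₀ ≤ s → t ≤ a₃ → ContinuousOn (fun t => f (γ t)) (Icc s t) :=
    fun hs ht => f.continuous.comp_continuousOn <| hcont.mono fun _ hx =>
      hmem (hs.trans hx.1) (hx.2.trans ht)
  obtain ⟨c₁, hc₁, hfc₁⟩ := intermediate_value_Ioo h₀₁.le (hg le_rfl (by linarith)) ⟨hf₀, hf₁⟩
  obtain ⟨c₂, hc₂, hfc₂⟩ := intermediate_value_Ioo' h₁₂.le (hg h₀₁.le (by linarith)) ⟨hf₂, hf₁⟩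
  obtain ⟨c₃, hc₃, hfc₃⟩ := intermediate_value_Ioo h₂₃.le (hg (by linarith) le_rfl) ⟨hf₂, hf₃⟩
  have hc₁I : c₁ ∈ Icc (0 : ℝ) 1 := hmem hc₁.1.le (by linarith [hc₁.2])
  have hc₂I : c₂ ∈ Icc (0 : ℝ) 1 := hmem (by linarith [hc₂.1]) (by linarith [hc₂.2])
  have hc₃I : c₃ ∈ Icc (0 : ℝ) 1 := hmem (by linarith [hc₃.1]) hc₃.2.le
  have hmemP : ∀ {t : ℝ}, a₀ ≤ t → t ≤ a₃ → γ t ∈ P := fun hs ht =>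
    hPc.frontier_subset (hbd _ (hmem hs ht))
  rcases hP.eq_or_eq_or_eq_of_mem_frontier_of_apply_eq hPc (f : Module.Dual ℝ E)
      (hmemP h₀₁.le (by linarith)) (hmemP le_rfl (by linarith)) (by simpa using hf₁)
      (by simpa using hf₀) (hbd _ hc₁I) (hbd _ hc₂I) (hbd _ hc₃I) (by simpa using hfc₁)
      (by simpa using hfc₂) (by simpa using hfc₃) with h | h | h
  · linarith [hinj hc₁I hc₂I h, hc₁.2, hc₂.1]
  · linarith [hinj hc₂I hc₃I h, hc₂.2, hc₃.1]
  · linarith [hinj hc₃I hc₁I h, hc₁.2, hc₂.1, hc₂.2, hc₃.1]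

end ConvexSetsInPlane

section DiametralBall

variable {F : Type*} [NormedAddCommGroup F] [InnerProductSpace ℝ F]

def diametralBall (x z : F) : Set F := closedBall (midpoint ℝ x z) (dist x z / 2)

lemma mem_diametralBall_iff_inner_nonpos {x z v : F} :
    v ∈ diametralBall x z ↔ ⟪x - v, z - v⟫ ≤ 0 := by
  have hmid : v - midpoint ℝ x z = -((2⁻¹ : ℝ) • ((x - v) + (z - v))) := by
    rw [midpoint_eq_smul_add, invOf_eq_inv]; module
  have hxz : x - z = (x - v) - (z - v) := by abel
  rw [diametralBall, mem_closedBall, dist_eq_norm, dist_eq_norm, hmid, hxz]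
  generalize x - v = a, z - v = b
  rw [norm_neg, norm_smul, ← sq_le_sq₀ (by positivity) (by positivity), mul_pow, div_pow,
    norm_add_sq_real, norm_sub_sq_real]
  norm_num
  constructor <;> intro h <;> linarith

lemma dist_le_of_mem_diametralBall {x z v : F} (hv : v ∈ diametralBall x z) :
    dist v z ≤ dist x z := by
  have hv' : dist v (midpoint ℝ x z) ≤ dist x z / 2 := hv
  have := dist_triangle v (midpoint ℝ x z) z
  rw [dist_midpoint_right] at this
  norm_num at this
  linarith

lemma diametralBall_subset_of_mem_segment {x z p q : F} (hp : p ∈ segment ℝ x z)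
    (hq : q ∈ segment ℝ x z) : diametralBall p q ⊆ diametralBall x z := by
  rw [segment_eq_image'] at hp hq
  obtain ⟨s, ⟨hs₀, hs₁⟩, rfl⟩ := hp
  obtain ⟨t, ⟨ht₀, ht₁⟩, rfl⟩ := hq
  refine closedBall_subset_closedBall' ?_
  have hmid : midpoint ℝ (x + s • (z - x)) (x + t • (z - x)) - midpoint ℝ x z =
      ((s + t - 1) / 2) • (z - x) := by
    simp only [midpoint_eq_smul_add, invOf_eq_inv]; module
  rw [dist_add_left, dist_eq_norm, ← sub_smul, dist_eq_norm, hmid, norm_smul, norm_smul,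
    Real.norm_eq_abs, Real.norm_eq_abs, abs_div, abs_two, ← dist_eq_norm, dist_comm z x]
  have hst : |s - t| + |s + t - 1| ≤ 1 := by
    rcases abs_cases (s - t) with ⟨h, -⟩ | ⟨h, -⟩ <;>
      rcases abs_cases (s + t - 1) with ⟨h', -⟩ | ⟨h', -⟩ <;> linarith
  nlinarith [dist_nonneg (x := x) (y := z)]

lemma mem_diametralBall_of_mem_segment {x z v p q : F} (hv : v ∈ diametralBall x z)
    (hp : p ∈ segment ℝ v x) (hq : q ∈ segment ℝ v z) : v ∈ diametralBall p q := by
  rw [mem_diametralBall_iff_inner_nonpos] at hv ⊢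
  rw [segment_eq_image'] at hp hq
  obtain ⟨s, ⟨hs₀, -⟩, rfl⟩ := hp
  obtain ⟨t, ⟨ht₀, -⟩, rfl⟩ := hq
  simp only [add_sub_cancel_left, real_inner_smul_left, real_inner_smul_right]
  exact mul_nonpos_of_nonneg_of_nonpos ht₀ (mul_nonpos_of_nonneg_of_nonpos hs₀ hv)

end DiametralBall

theorem stmt11_general (V : Finset (EuclideanSpace ℝ (Fin 2)))
    (P : Set (EuclideanSpace ℝ (Fin 2))) (hP : P = convexHull ℝ (V : Set (EuclideanSpace ℝ (Fin 2))))
    (c vi vj : EuclideanSpace ℝ (Fin 2)) (r : ℝ)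
    (hmid : c = midpoint ℝ vi vj) (hri : dist c vi = r)
    (hball : P ⊆ Metric.closedBall c r)
    (γ : ℝ → EuclideanSpace ℝ (Fin 2))
    (hcont : ContinuousOn γ (Set.Icc (0:ℝ) 1))
    (hinj : Set.InjOn γ (Set.Icc (0:ℝ) 1))
    (h0 : γ 0 = vj) (h1 : γ 1 = vi)
    (hbd : ∀ t ∈ Set.Icc (0:ℝ) 1, γ t ∈ frontier P) :
    ∀ t₁ ∈ Set.Icc (0:ℝ) 1, ∀ t₂ ∈ Set.Icc (0:ℝ) 1, ∀ t₃ ∈ Set.Icc (0:ℝ) 1,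
      t₁ ≤ t₂ → t₂ ≤ t₃ → dist (γ t₂) (γ t₃) ≤ dist (γ t₁) (γ t₃) := by
  intro t₁ ht₁ t₂ ht₂ t₃ ht₃ h₁₂ h₂₃
  have : Fact (finrank ℝ (EuclideanSpace ℝ (Fin 2)) = 2) := ⟨finrank_euclideanSpace_fin⟩
  have hPconv : Convex ℝ P := hP ▸ convex_convexHull ℝ _
  have hPcl : IsClosed P := hP ▸ (V.finite_toSet.isCompact_convexHull (𝕜 := ℝ)).isClosed
  obtain ⟨p, hp_left, hp_mid⟩ := hPconv.segment_inter_segment_nonempty_of_injOn_frontier hPcl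
    hcont hinj hbd le_rfl ht₁.1 h₁₂ h₂₃ ht₃.2
  obtain ⟨q, hq_mid, hq_right⟩ := hPconv.segment_inter_segment_nonempty_of_injOn_frontier hPcl
    hcont hinj hbd ht₁.1 h₁₂ h₂₃ ht₃.2 le_rfl
  rw [h0, segment_symm] at hp_left
  rw [h1] at hq_right
  have hy : γ t₂ ∈ diametralBall vj vi := by
    have hr : r = dist vj vi / 2 := by
      rw [← hri, hmid, dist_midpoint_left, dist_comm]; norm_num; ring
    have := hball (hPcl.frontier_subset (hbd t₂ ht₂))
    rwa [hmid, hr, midpoint_comm] at this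
  exact dist_le_of_mem_diametralBall <| diametralBall_subset_of_mem_segment hp_mid hq_mid <|
    mem_diametralBall_of_mem_segment hy hp_left hq_right

/-- Let `P` be a convex polygon contained in the closed disk of center `c`
and radius `r`, with vertices `vi, vj ∈ P` antipodal on the bounding circle
(`c = midpoint vi vj`, `dist c vi = r`). Let `γ` be an injective continuous
parameterization (from `vj` to `vi`) of the boundary chain of `P` lying in the closed
half-plane bounded by the line `vi vj` with inward normal `u`. Then the chain is
self-approaching from `vj` to `vi`. -/
theorem stmt11 (V : Finset (EuclideanSpace ℝ (Fin 2)))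
    (P : Set (EuclideanSpace ℝ (Fin 2))) (hP : P = convexHull ℝ (V : Set (EuclideanSpace ℝ (Fin 2))))
    (c vi vj : EuclideanSpace ℝ (Fin 2)) (r : ℝ) (hr : 0 < r)
    (hvi : vi ∈ V) (hvj : vj ∈ V)
    (hmid : c = midpoint ℝ vi vj) (hri : dist c vi = r)
    (hball : P ⊆ Metric.closedBall c r)
    (u : EuclideanSpace ℝ (Fin 2)) (hu : u ≠ 0) (huperp : ⟪u, vj - vi⟫ = 0)
    (γ : ℝ → EuclideanSpace ℝ (Fin 2))
    (hcont : ContinuousOn γ (Set.Icc (0:ℝ) 1))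
    (hinj : Set.InjOn γ (Set.Icc (0:ℝ) 1))
    (h0 : γ 0 = vj) (h1 : γ 1 = vi)
    (hbd : ∀ t ∈ Set.Icc (0:ℝ) 1, γ t ∈ frontier P)
    (hside : ∀ t ∈ Set.Icc (0:ℝ) 1, 0 ≤ ⟪γ t - c, u⟫) :
    ∀ t₁ ∈ Set.Icc (0:ℝ) 1, ∀ t₂ ∈ Set.Icc (0:ℝ) 1, ∀ t₃ ∈ Set.Icc (0:ℝ) 1,
      t₁ ≤ t₂ → t₂ ≤ t₃ → dist (γ t₂) (γ t₃) ≤ dist (γ t₁) (γ t₃) :=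
  stmt11_general V P hP c vi vj r hmid hri hball γ hcont hinj h0 h1 hbd
end

section
/- Let γ : [0,1] → ℝ² be a continuous piecewise-linear path such that for every t ∈ [0,1), the remainder of the path γ([t,1]) is contained in a closed cone with apex γ(t) and opening angle at most π/2 whose axis direction at each point contains the forward direction of the path. Then γ is self-approaching from γ(0) to γ(1). -/
/-!
Two vectors within angle `π/4` of a common axis make an angle at most `π/2`, so the cone
condition at `γ s` gives `⟪γ β - γ s, γ t₃ - γ s⟫ ≥ 0` whenever `s < t₃` lies on a segment ending
at time `β`: the velocity of the path points weakly towards `γ t₃`. For `a < b` on that segment,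
`γ a` and `γ b` are symmetric about `γ s`, `s` the midpoint time, which turns this inequality into
`dist (γ b) (γ t₃) ≤ dist (γ a) (γ t₃)`. Gluing the segments of the partition truncated at `t₃`
makes `s ↦ dist (γ s) (γ t₃)` antitone on `[0, t₃]`.
-/

open Set InnerProductGeometry
open scoped RealInnerProductSpace

section InnerProductSpace

variable {E : Type*} [NormedAddCommGroup E] [InnerProductSpace ℝ E]

theorem InnerProductGeometry.inner_nonneg_of_angle_le_pi_div_two {v w : E}
    (h : angle v w ≤ Real.pi / 2) : 0 ≤ ⟪v, w⟫ := by
  rw [← cos_angle_mul_norm_mul_norm]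
  have := Real.cos_nonneg_of_mem_Icc ⟨by linarith [Real.pi_pos, angle_nonneg v w], h⟩
  positivity

theorem InnerProductGeometry.inner_nonneg_of_angle_le_pi_div_four {u v w : E}
    (hv : angle v u ≤ Real.pi / 4) (hw : angle w u ≤ Real.pi / 4) : 0 ≤ ⟪v, w⟫ :=
  inner_nonneg_of_angle_le_pi_div_two <| by
    linarith [angle_le_angle_add_angle v u w, angle_comm u w]

theorem inner_sub_nonneg_of_angle_sub_le_pi_div_four {u p x y : E}
    (hx : x ≠ p → angle (x - p) u ≤ Real.pi / 4) (hy : y ≠ p → angle (y - p) u ≤ Real.pi / 4) :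
    0 ≤ ⟪x - p, y - p⟫ := by
  obtain rfl | hxp := eq_or_ne x p
  · simp
  obtain rfl | hyp := eq_or_ne y p
  · simp
  exact inner_nonneg_of_angle_le_pi_div_four (hx hxp) (hy hyp)

theorem dist_add_le_dist_sub_of_inner_nonneg {m e q : E} (h : 0 ≤ ⟪e, q - m⟫) :
    dist (m + e) q ≤ dist (m - e) q := by
  rw [dist_eq_norm, dist_eq_norm, show m + e - q = e - (q - m) by abel,
    show m - e - q = -(e + (q - m)) by abel, norm_neg,
    ← pow_le_pow_iff_left₀ (norm_nonneg _) (norm_nonneg _) two_ne_zero,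
    norm_sub_sq_real, norm_add_sq_real]
  linarith

theorem eq_add_smul_of_eq_lineMap {γ : ℝ → E} {α β s : ℝ}
    (h : γ s = AffineMap.lineMap (γ α) (γ β) ((s - α) / (β - α))) :
    γ s = γ α + (s - α) • (β - α)⁻¹ • (γ β - γ α) := by
  rw [h, AffineMap.lineMap_apply_module', add_comm, div_eq_mul_inv, mul_smul]

theorem antitoneOn_dist_of_eq_add_smul {γ : ℝ → E} {α β t : ℝ} {w : E}
    (hlin : ∀ s ∈ Icc α β, γ s = γ α + (s - α) • w)
    (hcone : ∀ s ∈ Ico α (min β t), 0 ≤ ⟪γ β - γ s, γ t - γ s⟫) :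
    AntitoneOn (fun s => dist (γ s) (γ t)) (Icc α (min β t)) := by
  intro a ha b hb hab
  obtain rfl | hlt := hab.eq_or_lt
  · rfl
  obtain ⟨hαa, -, -⟩ : α ≤ a ∧ a ≤ β ∧ a ≤ t := by simpa only [mem_Icc, le_min_iff] using ha
  obtain ⟨-, hbβ, hbt⟩ : α ≤ b ∧ b ≤ β ∧ b ≤ t := by simpa only [mem_Icc, le_min_iff] using hb
  set s := (a + b) / 2 with hs_def
  have hs : s ∈ Ico α (min β t) := ⟨by linarith, lt_min (by linarith) (by linarith)⟩
  have hsβ : s ∈ Icc α β := ⟨hs.1, by linarith⟩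
  have hb_eq : γ b = γ s + ((b - a) / 2) • w := by
    rw [hlin b ⟨by linarith, hbβ⟩, hlin s hsβ, hs_def]; module
  have ha_eq : γ a = γ s - ((b - a) / 2) • w := by
    rw [hlin a ⟨hαa, by linarith⟩, hlin s hsβ, hs_def]; module
  have hβ_eq : γ β - γ s = (β - s) • w := by
    rw [hlin β ⟨by linarith, le_rfl⟩, hlin s hsβ]; module
  have hw : 0 ≤ ⟪w, γ t - γ s⟫ := by
    have := hcone s hs
    rw [hβ_eq, real_inner_smul_left] at this
    exact nonneg_of_mul_nonneg_right this (by linarith)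
  simp only [hb_eq, ha_eq]
  exact dist_add_le_dist_sub_of_inner_nonneg <| by
    rw [real_inner_smul_left]; exact mul_nonneg (by linarith) hw

end InnerProductSpace

section Order

variable {α β : Type*} [LinearOrder α] [Preorder β] {f : α → β}

theorem antitoneOn_Icc_of_partition {m : ℕ} {τ : Fin (m + 1) → α} (hτ : Monotone τ)
    (h : ∀ i : Fin m, AntitoneOn f (Icc (τ i.castSucc) (τ i.succ))) :
    AntitoneOn f (Icc (τ 0) (τ (Fin.last m))) := by
  induction (Fin.last m) using Fin.induction with
  | zero => exact (subsingleton_Icc_of_ge le_rfl).antitoneOn f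
  | succ i ih =>
    have h0 : τ 0 ≤ τ i.castSucc := hτ (Fin.zero_le _)
    have h1 : τ i.castSucc ≤ τ i.succ := hτ i.castSucc_le_succ
    rw [← Icc_union_Icc_eq_Icc h0 h1]
    exact ih.union_right (h i) (isGreatest_Icc h0) (isLeast_Icc h1)

theorem AntitoneOn.Icc_min_min {a b t : α} (hab : a ≤ b) (hf : AntitoneOn f (Icc a (min b t))) :
    AntitoneOn f (Icc (min a t) (min b t)) := by
  rcases le_total a t with hat | hta
  · rwa [min_eq_left hat]
  · rw [min_eq_right hta, min_eq_right (hta.trans hab)]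
    exact (subsingleton_Icc_of_ge le_rfl).antitoneOn f

end Order

theorem stmt12_general (γ : ℝ → EuclideanSpace ℝ (Fin 2))
    (hpl : ∃ (m : ℕ) (τ : Fin (m + 1) → ℝ), StrictMono τ ∧ τ 0 = 0 ∧ τ (Fin.last m) = 1 ∧
      ∀ i : Fin m, ∀ s ∈ Set.Icc (τ i.castSucc) (τ i.succ),
        γ s = AffineMap.lineMap (γ (τ i.castSucc)) (γ (τ i.succ))
          ((s - τ i.castSucc) / (τ i.succ - τ i.castSucc)))
    (hcone : ∀ t ∈ Set.Ico (0:ℝ) 1, ∃ u : EuclideanSpace ℝ (Fin 2), ‖u‖ = 1 ∧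
      ∀ s ∈ Set.Icc t 1, γ s ≠ γ t →
        InnerProductGeometry.angle (γ s - γ t) u ≤ Real.pi / 4) :
    ∀ t₁ ∈ Set.Icc (0:ℝ) 1, ∀ t₂ ∈ Set.Icc (0:ℝ) 1, ∀ t₃ ∈ Set.Icc (0:ℝ) 1,
      t₁ ≤ t₂ → t₂ ≤ t₃ → dist (γ t₂) (γ t₃) ≤ dist (γ t₁) (γ t₃) := by
  obtain ⟨m, τ, hτ, hτ0, hτ1, hseg⟩ := hpl
  intro t₁ ht₁ t₂ _ t₃ ht₃ h12 h23
  have hinner : ∀ t ∈ Ico (0:ℝ) 1, ∀ s₁ ∈ Icc t 1, ∀ s₂ ∈ Icc t 1,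
      0 ≤ ⟪γ s₁ - γ t, γ s₂ - γ t⟫ := by
    intro t ht s₁ hs₁ s₂ hs₂
    obtain ⟨u, -, hu⟩ := hcone t ht
    exact inner_sub_nonneg_of_angle_sub_le_pi_div_four (hu s₁ hs₁) (hu s₂ hs₂)
  have hpiece (i : Fin m) : AntitoneOn (fun s => dist (γ s) (γ t₃))
      (Icc (min (τ i.castSucc) t₃) (min (τ i.succ) t₃)) := by
    have h0 : 0 ≤ τ i.castSucc := hτ0 ▸ hτ.monotone (Fin.zero_le _)
    have h1 : τ i.succ ≤ 1 := hτ1 ▸ hτ.monotone (Fin.le_last _)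
    refine AntitoneOn.Icc_min_min (hτ.monotone i.castSucc_le_succ) (antitoneOn_dist_of_eq_add_smul
      (fun s hs => eq_add_smul_of_eq_lineMap (hseg i s hs)) fun s hs => ?_)
    obtain ⟨hsβ, hst⟩ := lt_min_iff.mp hs.2
    exact hinner s ⟨h0.trans hs.1, hst.trans_le ht₃.2⟩ _ ⟨hsβ.le, h1⟩ _ ⟨hst.le, ht₃.2⟩
  have hanti : AntitoneOn (fun s => dist (γ s) (γ t₃)) (Icc 0 t₃) := by
    simpa [hτ0, hτ1, ht₃.1, ht₃.2] using antitoneOn_Icc_of_partition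
      (τ := fun i => min (τ i) t₃) (hτ.monotone.min monotone_const) hpiece
  exact hanti ⟨ht₁.1, h12.trans h23⟩ ⟨ht₁.1.trans h12, h23⟩ h12

/-- Icking–Klein–Langetepe, Lemma 3: Let `γ : [0,1] → ℝ²` be a continuous
piecewise-linear path such that for every `t ∈ [0,1)` there is a closed cone with apex
`γ t` and angular width at most `π/2` (i.e. all directions within angle `π/4` of some unit
axis `u`) containing the remainder `γ([t,1])` of the path. Then `γ` is self-approaching
from `γ 0` to `γ 1`. -/
theorem stmt12 (γ : ℝ → EuclideanSpace ℝ (Fin 2))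
    (hcont : ContinuousOn γ (Set.Icc (0:ℝ) 1))
    (hpl : ∃ (m : ℕ) (τ : Fin (m + 1) → ℝ), StrictMono τ ∧ τ 0 = 0 ∧ τ (Fin.last m) = 1 ∧
      ∀ i : Fin m, ∀ s ∈ Set.Icc (τ i.castSucc) (τ i.succ),
        γ s = AffineMap.lineMap (γ (τ i.castSucc)) (γ (τ i.succ))
          ((s - τ i.castSucc) / (τ i.succ - τ i.castSucc)))
    (hcone : ∀ t ∈ Set.Ico (0:ℝ) 1, ∃ u : EuclideanSpace ℝ (Fin 2), ‖u‖ = 1 ∧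
      ∀ s ∈ Set.Icc t 1, γ s ≠ γ t →
        InnerProductGeometry.angle (γ s - γ t) u ≤ Real.pi / 4) :
    ∀ t₁ ∈ Set.Icc (0:ℝ) 1, ∀ t₂ ∈ Set.Icc (0:ℝ) 1, ∀ t₃ ∈ Set.Icc (0:ℝ) 1,
      t₁ ≤ t₂ → t₂ ≤ t₃ → dist (γ t₂) (γ t₃) ≤ dist (γ t₁) (γ t₃) :=
  stmt12_general γ hpl hcone
end

section
/- For any convex polygon P in the plane, there exists a point z outside P such that z lies in none of the edge slabs of P; equivalently, the orthogonal projection of z onto the line of each edge e lies strictly outside the closed segment e. Consequently, z has a unique farthest vertex of P and every point of the boundary of P can strictly increase its distance to z by moving along the boundary, except at that unique vertex. -/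
/-!
Choose a direction `u` orthogonal to no edge; this is possible because finitely many proper
subspaces never cover a real vector space. Along the ray `t • u`, the projection coordinate
`⟪e, t • u - a⟫` of each edge `e` starting at `a` is an affine function of `t` with nonzero slope,
so for large `t` it leaves the bounded interval `[0, ‖e‖²]`, and the ray leaves the bounded
polygon as well.
-/

open scoped RealInnerProductSpace
open Filter Bornology

lemma exists_forall_inner_ne_zero {𝕜 E ι : Type*} [RCLike 𝕜] [NormedAddCommGroup E]
    [InnerProductSpace 𝕜 E] [Finite ι] {w : ι → E} (hw : ∀ i, w i ≠ 0) :
    ∃ u : E, ∀ i, inner 𝕜 (w i) u ≠ 0 := by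
  by_contra! h
  obtain ⟨i, hi⟩ := Subspace.exists_eq_top_of_iUnion_eq_univ (p := fun i ↦ (𝕜 ∙ w i)ᗮ) <|
    Set.eq_univ_of_forall fun u ↦ by
      obtain ⟨i, hi⟩ := h u
      exact Set.mem_iUnion.2 ⟨i, Submodule.mem_orthogonal_singleton_iff_inner_right.2 hi⟩
  exact hw i (by simpa [Submodule.orthogonal_eq_top_iff] using hi)

lemma tendsto_smul_add_atTop_cobounded {E : Type*} [NormedAddCommGroup E] [NormedSpace ℝ E]
    {u : E} (hu : u ≠ 0) (a : E) :
    Tendsto (fun t : ℝ ↦ t • u + a) atTop (cobounded E) := by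
  rw [← tendsto_norm_atTop_iff_cobounded]
  refine tendsto_atTop_mono' atTop ?_
    (tendsto_atTop_add_const_right _ (-‖a‖) (tendsto_id.atTop_mul_const (norm_pos_iff.2 hu)))
  filter_upwards [eventually_ge_atTop 0] with t ht
  calc t * ‖u‖ + -‖a‖ = ‖t • u‖ - ‖a‖ := by
        rw [norm_smul, Real.norm_of_nonneg ht]; ring
    _ ≤ ‖t • u + a‖ := norm_sub_le_norm_add _ _

lemma eventually_inner_smul_sub_notMem {E : Type*} [NormedAddCommGroup E]
    [InnerProductSpace ℝ E] {d u : E} (hdu : ⟪d, u⟫ ≠ 0) (a : E) {S : Set ℝ}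
    (hS : IsBounded S) : ∀ᶠ t : ℝ in atTop, ⟪d, t • u - a⟫ ∉ S := by
  have hline : (fun t : ℝ ↦ ⟪d, t • u - a⟫) = fun t ↦ t • ⟪d, u⟫ + -⟪d, a⟫ := by
    ext t
    rw [inner_sub_right, real_inner_smul_right, smul_eq_mul, sub_eq_add_neg]
  have := tendsto_smul_add_atTop_cobounded hdu (-⟪d, a⟫)
  rw [← hline] at this
  exact this.eventually_mem (isBounded_def.1 hS)

theorem exists_notMem_forall_inner_sub_notMem {E ι : Type*} [NormedAddCommGroup E]
    [InnerProductSpace ℝ E] [Finite ι] [Nonempty ι] {K : Set E} (hK : IsBounded K)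
    {a d : ι → E} (hd : ∀ i, d i ≠ 0) {S : ι → Set ℝ} (hS : ∀ i, IsBounded (S i)) :
    ∃ z ∉ K, ∀ i, ⟪d i, z - a i⟫ ∉ S i := by
  obtain ⟨u, hu⟩ := exists_forall_inner_ne_zero (𝕜 := ℝ) hd
  have hu0 : u ≠ 0 := fun h ↦ hu (Classical.arbitrary ι) (by simp [h])
  have hfar : ∀ᶠ t : ℝ in atTop, t • u ∉ K := by
    simpa using (tendsto_smul_add_atTop_cobounded hu0 0).eventually_mem (isBounded_def.1 hK)
  have hslabs : ∀ᶠ t : ℝ in atTop, ∀ i, ⟪d i, t • u - a i⟫ ∉ S i :=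
    eventually_all.2 fun i ↦ eventually_inner_smul_sub_notMem (hu i) (a i) (hS i)
  obtain ⟨t, ht⟩ := (hfar.and hslabs).exists
  exact ⟨t • u, ht⟩

/-- For any (strictly) convex polygon `P` with vertices
`v 0, …, v (m+2)` (at least three vertices) in counterclockwise order (each consecutive
cross product positive), there exists a point `z` outside `P` lying in none of the edge
slabs: for each edge `e_i = [v i, v (i+1)]` (indices cyclic), the orthogonal projection of
`z` onto the line through `e_i` lies strictly outside the closed segment. -/
theorem stmt18 (m : ℕ) (v : Fin (m + 3) → EuclideanSpace ℝ (Fin 2))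
    (hccw : ∀ i : Fin (m + 3),
      0 < (v (i + 1) - v i) 0 * (v (i + 2) - v (i + 1)) 1
          - (v (i + 1) - v i) 1 * (v (i + 2) - v (i + 1)) 0) :
    ∃ z : EuclideanSpace ℝ (Fin 2), z ∉ convexHull ℝ (Set.range v) ∧
      ∀ i : Fin (m + 3),
        ¬ (0 ≤ ⟪v (i + 1) - v i, z - v i⟫ ∧
            ⟪v (i + 1) - v i, z - v i⟫ ≤ ‖v (i + 1) - v i‖ ^ 2) := by
  have hedge : ∀ i, v (i + 1) - v i ≠ 0 := fun i h ↦ by simpa [h] using hccw i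
  exact exists_notMem_forall_inner_sub_notMem
    ((Set.finite_range v).isCompact_convexHull (𝕜 := ℝ)).isBounded hedge
    fun _ ↦ Metric.isBounded_Icc _ _
end
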